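/- Fix k, k' ∈ ℂ. For t ∈ ℂ∖{0}, let N(t) be the 3×3 complex matrix with rows (t, 0, 0), (0, t, 0), (k·t - k/t², k'·t - k'/t², 1/t²). Then: (1) N(t) ∈ SL(3,ℂ) for every t ≠ 0, and N(t₁)·N(t₂) = N(t₁·t₂) for all t₁, t₂ ≠ 0, so that {N(t) : t ∈ ℂ∖{0}} is a subgroup of SL(3,ℂ); (2) every N(t) maps the set C = {(x:y:z) ∈ ℙ²(ℂ) : x²·y + x·y² = 0} onto itself; and (3) every N(t) fixes each of the four points (0:0:1), (1:0:k), (0:1:k'), and (1:1:k+k') of ℙ²(ℂ). -/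
import Mathlib


open Matrix

noncomputable section

/-- The special linear group `SL(3, ℂ)`. -/
abbrev SL3 := Matrix.SpecialLinearGroup (Fin 3) ℂ

/-- The complex projective plane `ℙ²(ℂ)`. -/
abbrev P2 := Projectivization ℂ (Fin 3 → ℂ)

/-- The action of `SL(3, ℂ)` on `ℙ²(ℂ)` induced by the linear action on `ℂ³`. -/
noncomputable def act (g : SL3) (p : P2) : P2 :=
  Projectivization.map (Matrix.SpecialLinearGroup.toLin' g).toLinearMap
    (Matrix.SpecialLinearGroup.toLin' g).injective p
/-- The matrix `N(t)` with rows `(t,0,0)`, `(0,t,0)`,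
`(kt - k/t², k't - k'/t², 1/t²)`. -/
def Nfam (k k' t : ℂ) : Matrix (Fin 3) (Fin 3) ℂ :=
  !![t, 0, 0;
     0, t, 0;
     k * t - k / t ^ 2, k' * t - k' / t ^ 2, 1 / t ^ 2]

/-- The cone over three points (three concurrent lines), `{x²·y + x·y² = 0}`. -/
def Ccone : Set P2 := {p : P2 | p.rep 0 ^ 2 * p.rep 1 + p.rep 0 * p.rep 1 ^ 2 = 0}

/-- The `D₄` singular point `(0:0:1)`. -/
def r₀ : P2 := Projectivization.mk ℂ ![0, 0, 1] (by
  intro h; simpa using congrFun h 2)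

/-- The point `(1:0:k)`. -/
def r₁ (k : ℂ) : P2 := Projectivization.mk ℂ ![1, 0, k] (by
  intro h; simpa using congrFun h 0)

/-- The point `(0:1:k')`. -/
def r₂ (k' : ℂ) : P2 := Projectivization.mk ℂ ![0, 1, k'] (by
  intro h; simpa using congrFun h 1)

/-- The point `(1:1:k+k')`. -/
def r₃ (k k' : ℂ) : P2 := Projectivization.mk ℂ ![1, 1, k + k'] (by
  intro h; simpa using congrFun h 0)

lemma mulVec_ne (g : SL3) {v : Fin 3 → ℂ} (hv : v ≠ 0) :
    (g : Matrix (Fin 3) (Fin 3) ℂ) *ᵥ v ≠ 0 := by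
  intro h
  apply hv
  have := (Matrix.SpecialLinearGroup.toLin' g).injective (a₁ := v) (a₂ := 0)
  simp only [map_zero] at this
  apply this
  rw [Matrix.SpecialLinearGroup.toLin'_apply, Matrix.toLin'_apply, h]

lemma act_mk (g : SL3) (v : Fin 3 → ℂ) (hv : v ≠ 0) :
    act g (Projectivization.mk ℂ v hv) =
    Projectivization.mk ℂ ((g : Matrix (Fin 3) (Fin 3) ℂ) *ᵥ v) (mulVec_ne g hv) := by
  rw [act, Projectivization.map_mk]
  apply (Projectivization.mk_eq_mk_iff ℂ _ _ _ _).2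
  exact ⟨1, by simp [Matrix.SpecialLinearGroup.toLin'_apply, Matrix.toLin'_apply]⟩

lemma mem_Ccone_mk (v : Fin 3 → ℂ) (hv : v ≠ 0) :
    Projectivization.mk ℂ v hv ∈ Ccone ↔ v 0 ^ 2 * v 1 + v 0 * v 1 ^ 2 = 0 := by
  obtain ⟨a, ha⟩ := Projectivization.exists_smul_eq_mk_rep ℂ v hv
  have h0 : (Projectivization.mk ℂ v hv).rep 0 = a * v 0 := by rw [← ha]; rfl
  have h1 : (Projectivization.mk ℂ v hv).rep 1 = a * v 1 := by rw [← ha]; rfl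
  have key : (Projectivization.mk ℂ v hv).rep 0 ^ 2 * (Projectivization.mk ℂ v hv).rep 1
      + (Projectivization.mk ℂ v hv).rep 0 * (Projectivization.mk ℂ v hv).rep 1 ^ 2
      = (a : ℂ) ^ 3 * (v 0 ^ 2 * v 1 + v 0 * v 1 ^ 2) := by rw [h0, h1]; ring
  simp [Ccone, Set.mem_setOf_eq, key, mul_eq_zero, a.ne_zero, pow_eq_zero_iff]

/-- The one-parameter family `N(t)` from the proof of Lemma 2.15: each `N(t)` lies in
`SL(3,ℂ)`, the family is a subgroup (`N(t₁)·N(t₂) = N(t₁t₂)`), each `N(t)` maps the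
`D₄` cubic `{x²·y + x·y² = 0}` onto itself, and each `N(t)` fixes the points
`(0:0:1)`, `(1:0:k)`, `(0:1:k')` and `(1:1:k+k')`. -/
theorem one_parameter_family_coneD4 (k k' : ℂ) :
    (∀ t : ℂ, t ≠ 0 → ∃ g : SL3, (g : Matrix (Fin 3) (Fin 3) ℂ) = Nfam k k' t) ∧
    (∀ t₁ t₂ : ℂ, t₁ ≠ 0 → t₂ ≠ 0 → Nfam k k' t₁ * Nfam k k' t₂ = Nfam k k' (t₁ * t₂)) ∧
    (∀ t : ℂ, t ≠ 0 → ∀ g : SL3, (g : Matrix (Fin 3) (Fin 3) ℂ) = Nfam k k' t →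
      act g '' Ccone = Ccone ∧
      act g r₀ = r₀ ∧ act g (r₁ k) = r₁ k ∧ act g (r₂ k') = r₂ k' ∧
      act g (r₃ k k') = r₃ k k') := by
  have hdet : ∀ t : ℂ, t ≠ 0 → (Nfam k k' t).det = 1 := by
    intro t ht
    simp only [Nfam, Matrix.det_fin_three]
    simp
    field_simp
    try ring
  have hmul : ∀ t₁ t₂ : ℂ, t₁ ≠ 0 → t₂ ≠ 0 →
      Nfam k k' t₁ * Nfam k k' t₂ = Nfam k k' (t₁ * t₂) := by
    intro t₁ t₂ h1 h2
    ext i j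
    fin_cases i <;> fin_cases j <;>
      simp [Nfam, Matrix.mul_apply, Fin.sum_univ_three] <;>
      (try field_simp) <;> (try ring)
  have hN1 : Nfam k k' 1 = 1 := by
    rw [Matrix.one_fin_three]
    simp [Nfam]
  have hforward : ∀ (s : ℂ), s ≠ 0 → ∀ (h : SL3),
      (h : Matrix (Fin 3) (Fin 3) ℂ) = Nfam k k' s → ∀ p ∈ Ccone, act h p ∈ Ccone := by
    intro s hs h hh p hp
    induction p using Projectivization.ind with
    | h v hv =>
      rw [act_mk, mem_Ccone_mk]
      rw [mem_Ccone_mk] at hp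
      rw [hh]
      have e0 : (Nfam k k' s *ᵥ v) 0 = s * v 0 := by
        simp [Nfam, Matrix.mulVec, dotProduct, Fin.sum_univ_three]
      have e1 : (Nfam k k' s *ᵥ v) 1 = s * v 1 := by
        simp [Nfam, Matrix.mulVec, dotProduct, Fin.sum_univ_three]
      rw [e0, e1]
      have : (s * v 0) ^ 2 * (s * v 1) + (s * v 0) * (s * v 1) ^ 2
          = s ^ 3 * (v 0 ^ 2 * v 1 + v 0 * v 1 ^ 2) := by ring
      rw [this, hp, mul_zero]
  refine ⟨fun t ht => ⟨⟨Nfam k k' t, hdet t ht⟩, rfl⟩, hmul, ?_⟩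
  intro t ht g hg
  set g' : SL3 := ⟨Nfam k k' t⁻¹, hdet _ (inv_ne_zero ht)⟩ with hg'
  have hgg' : (g : Matrix (Fin 3) (Fin 3) ℂ) * (g' : Matrix (Fin 3) (Fin 3) ℂ) = 1 := by
    rw [hg]
    show Nfam k k' t * Nfam k k' t⁻¹ = 1
    rw [hmul t t⁻¹ ht (inv_ne_zero ht), mul_inv_cancel₀ ht, hN1]
  have hact2 : ∀ p : P2, act g (act g' p) = p := by
    intro p
    induction p using Projectivization.ind with
    | h v hv =>
      rw [act_mk, act_mk]
      apply (Projectivization.mk_eq_mk_iff ℂ _ _ _ _).2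
      refine ⟨1, ?_⟩
      simp [Matrix.mulVec_mulVec, hgg']
  have hfix : ∀ (v : Fin 3 → ℂ) (hv : v ≠ 0) (c : ℂ), c ≠ 0 →
      Nfam k k' t *ᵥ v = c • v → act g (Projectivization.mk ℂ v hv) = Projectivization.mk ℂ v hv := by
    intro v hv c hc hcv
    rw [act_mk]
    apply (Projectivization.mk_eq_mk_iff ℂ _ _ _ _).2
    exact ⟨Units.mk0 c hc, by rw [hg, hcv]; simp [Units.smul_def]⟩
  have ht2 : t ^ 2 ≠ 0 := pow_ne_zero 2 ht
  refine ⟨?_, ?_, ?_, ?_, ?_⟩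
  · ext p
    simp only [Set.mem_image]
    constructor
    · rintro ⟨q, hq, rfl⟩
      exact hforward t ht g hg q hq
    · intro hp
      exact ⟨act g' p, hforward t⁻¹ (inv_ne_zero ht) g' rfl p hp, hact2 p⟩
  · simp only [r₀]
    apply hfix _ _ (1 / t ^ 2) (by simpa using ht2)
    funext i
    fin_cases i <;> simp [Nfam, Matrix.mulVec, dotProduct, Fin.sum_univ_three]
  · simp only [r₁]
    apply hfix _ _ t ht
    funext i
    fin_cases i <;>
      · simp [Nfam, Matrix.mulVec, dotProduct, Fin.sum_univ_three]
        try ring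
  · simp only [r₂]
    apply hfix _ _ t ht
    funext i
    fin_cases i <;>
      · simp [Nfam, Matrix.mulVec, dotProduct, Fin.sum_univ_three]
        try ring
  · simp only [r₃]
    apply hfix _ _ t ht
    funext i
    fin_cases i <;>
      · simp [Nfam, Matrix.mulVec, dotProduct, Fin.sum_univ_three]
        try ring
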